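/- Let $H$ be a Hopf algebra, $(H,I)$ a Dorroh pair of bialgebras, and $A=H\ltimes_d I$. Define $B=\{a\in A : (1\otimes\pi_H)\Delta(a)=a\otimes 1\}$ where $\pi_H:A\to H$ is the projection. Then $B=\{(\lambda 1_H, x) : \lambda\in k,\ x\in I^{coH}\}$, where $I^{coH}=\{x\in I : \rho_r(x)=x\otimes 1_H\}$ is the set of right $H$-coinvariants of $I$. -/

import Mathlib

open TensorProduct

/-- Coassociativity of a (not necessarily counital) comultiplication. -/
def Coassoc {k : Type*} [Field k] {V : Type*} [AddCommGroup V] [Module k V]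
    (d : V →ₗ[k] V ⊗[k] V) : Prop :=
  (TensorProduct.assoc k V V V).toLinearMap ∘ₗ TensorProduct.map d LinearMap.id ∘ₗ d
    = TensorProduct.map LinearMap.id d ∘ₗ d

/-- The Dorroh comultiplication on `H × I` for a Dorroh pair of coalgebras `(H, I)`. -/
noncomputable def dorrohComul {k : Type*} [Field k] {H I : Type*} [AddCommGroup H] [Module k H]
    [AddCommGroup I] [Module k I]
    (dH : H →ₗ[k] H ⊗[k] H) (dI : I →ₗ[k] I ⊗[k] I)
    (ρl : I →ₗ[k] H ⊗[k] I) (ρr : I →ₗ[k] I ⊗[k] H) :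
    (H × I) →ₗ[k] (H × I) ⊗[k] (H × I) :=
  TensorProduct.map (LinearMap.inl k H I) (LinearMap.inl k H I) ∘ₗ dH ∘ₗ LinearMap.fst k H I
  + TensorProduct.map (LinearMap.inl k H I) (LinearMap.inr k H I) ∘ₗ ρl ∘ₗ LinearMap.snd k H I
  + TensorProduct.map (LinearMap.inr k H I) (LinearMap.inl k H I) ∘ₗ ρr ∘ₗ LinearMap.snd k H I
  + TensorProduct.map (LinearMap.inr k H I) (LinearMap.inr k H I) ∘ₗ dI ∘ₗ LinearMap.snd k H I

/-- The Dorroh multiplication on `H × I`, as a bilinear map. -/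
def dorrohMulL {k : Type*} [Field k] {H I : Type*} [AddCommGroup H] [Module k H]
    [AddCommGroup I] [Module k I]
    (mH : H →ₗ[k] H →ₗ[k] H) (mI : I →ₗ[k] I →ₗ[k] I)
    (l : H →ₗ[k] I →ₗ[k] I) (r : I →ₗ[k] H →ₗ[k] I) :
    (H × I) →ₗ[k] (H × I) →ₗ[k] H × I :=
  LinearMap.mk₂ k (fun p q => (mH p.1 q.1, l p.1 q.2 + r p.2 q.1 + mI p.2 q.2))
    (by intro p p' q; simp [Prod.ext_iff, map_add, LinearMap.add_apply]; abel)
    (by intro c p q; simp [Prod.ext_iff, map_smul, LinearMap.smul_apply, smul_add])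
    (by intro p q q'; simp [Prod.ext_iff, map_add, LinearMap.add_apply]; abel)
    (by intro c p q; simp [Prod.ext_iff, map_smul, LinearMap.smul_apply, smul_add])

/-- The induced multiplication on `A ⊗ A`: `(a ⊗ b)(c ⊗ d) = ac ⊗ bd`. -/
noncomputable def tensorMul {k : Type*} [Field k] {A : Type*} [AddCommGroup A] [Module k A]
    (m : A →ₗ[k] A →ₗ[k] A) : (A ⊗[k] A) →ₗ[k] (A ⊗[k] A) →ₗ[k] A ⊗[k] A :=
  TensorProduct.homTensorHomMap (RingHom.id k) A A A A ∘ₗ TensorProduct.map m m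

/-! Under `(H × I) ⊗ H ≃ (H ⊗ H) × (I ⊗ H)` the element `(1 ⊗ π_H)Δ(h, x)` becomes
`(Δ_H h, ρ_r x)`, so the defining equation of `B` splits into `Δ_H h = h ⊗ 1` and
`ρ_r x = x ⊗ 1`. By the counit axiom the first one forces `h = ε(h) 1`; conversely
`Δ_H (λ 1) = λ 1 ⊗ 1`. -/

namespace TensorProduct

variable {R M₁ M₂ M₃ : Type*} [CommSemiring R] [AddCommMonoid M₁] [AddCommMonoid M₂]
  [AddCommMonoid M₃] [Module R M₁] [Module R M₂] [Module R M₃]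

theorem prodLeft_map_inl_id (z : M₁ ⊗[R] M₃) :
    prodLeft R R M₁ M₂ M₃ (map (LinearMap.inl R M₁ M₂) LinearMap.id z) = (z, 0) := by
  induction z with
  | zero => simp [Prod.zero_eq_mk]
  | tmul m₁ m₃ => simp
  | add x y hx hy => simp_all

theorem prodLeft_map_inr_id (z : M₂ ⊗[R] M₃) :
    prodLeft R R M₁ M₂ M₃ (map (LinearMap.inr R M₁ M₂) LinearMap.id z) = (0, z) := by
  induction z with
  | zero => simp [Prod.zero_eq_mk]
  | tmul m₂ m₃ => simp
  | add x y hx hy => simp_all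

end TensorProduct

theorem eq_smul_of_comul_eq_tmul {R C : Type*} [CommSemiring R] [AddCommMonoid C] [Module R C]
    {Δ : C →ₗ[R] C ⊗[R] C} {ε : C →ₗ[R] R}
    (hε : ∀ c, TensorProduct.lid R C (map ε LinearMap.id (Δ c)) = c) {c g : C}
    (hc : Δ c = c ⊗ₜ g) : c = ε c • g := by
  simpa [hc] using (hε c).symm

theorem prodLeft_map_id_fst_dorrohComul {k : Type*} [Field k] {H I : Type*} [AddCommGroup H]
    [Module k H] [AddCommGroup I] [Module k I] (dH : H →ₗ[k] H ⊗[k] H) (dI : I →ₗ[k] I ⊗[k] I)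
    (ρl : I →ₗ[k] H ⊗[k] I) (ρr : I →ₗ[k] I ⊗[k] H) (a : H × I) :
    prodLeft k k H I H (map LinearMap.id (LinearMap.fst k H I) (dorrohComul dH dI ρl ρr a))
      = (dH a.1, ρr a.2) := by
  simp only [dorrohComul, LinearMap.add_apply, LinearMap.comp_apply, map_add, map_map,
    LinearMap.fst_comp_inl, LinearMap.fst_comp_inr, LinearMap.id_comp, map_zero_right,
    LinearMap.zero_apply, add_zero, prodLeft_map_inl_id, prodLeft_map_inr_id,
    LinearMap.fst_apply, LinearMap.snd_apply, Prod.mk_add_mk, zero_add]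

theorem stmt17_general {k : Type*} [Field k] {H I : Type*} [AddCommGroup H] [Module k H]
    [AddCommGroup I] [Module k I]
    (oneH : H) (dH : H →ₗ[k] H ⊗[k] H) (εH : H →ₗ[k] k)
    (dI : I →ₗ[k] I ⊗[k] I)
    (ρl : I →ₗ[k] H ⊗[k] I) (ρr : I →ₗ[k] I ⊗[k] H)
    -- `H` is a Hopf algebra with antipode `SH`
    (hεcounit : ∀ a : H,
      (TensorProduct.lid k H) (TensorProduct.map εH LinearMap.id (dH a)) = a ∧
      (TensorProduct.rid k H) (TensorProduct.map LinearMap.id εH (dH a)) = a)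
    (hdHone : dH oneH = oneH ⊗ₜ[k] oneH) :
    -- then `B = {a ∈ A | (1 ⊗ π_H)Δ(a) = a ⊗ 1}` equals `{(λ1_H, x) | λ ∈ k, x ∈ I^{coH}}`
    {a : H × I | TensorProduct.map LinearMap.id (LinearMap.fst k H I)
        (dorrohComul dH dI ρl ρr a) = a ⊗ₜ[k] oneH}
      = {p : H × I | ∃ (lam : k) (x : I),
          p = (lam • oneH, x) ∧ ρr x = x ⊗ₜ[k] oneH} := by
  ext ⟨h, x⟩
  simp only [Set.mem_ofPred_eq]
  rw [← (prodLeft k k H I H).injective.eq_iff, prodLeft_map_id_fst_dorrohComul, prodLeft_tmul,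
    Prod.mk.injEq]
  constructor
  · rintro ⟨hh, hx⟩
    exact ⟨εH h, x, by rw [← eq_smul_of_comul_eq_tmul (fun a => (hεcounit a).1) hh], hx⟩
  · rintro ⟨lam, y, hp, hy⟩
    obtain ⟨rfl, rfl⟩ := Prod.mk.inj hp
    simp [hdHone, hy, smul_tmul']

theorem stmt17 {k : Type*} [Field k] {H I : Type*} [AddCommGroup H] [Module k H]
    [AddCommGroup I] [Module k I]
    (mH : H →ₗ[k] H →ₗ[k] H) (oneH : H) (dH : H →ₗ[k] H ⊗[k] H) (εH : H →ₗ[k] k)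
    (SH : H →ₗ[k] H)
    (mI : I →ₗ[k] I →ₗ[k] I) (dI : I →ₗ[k] I ⊗[k] I)
    (l : H →ₗ[k] I →ₗ[k] I) (r : I →ₗ[k] H →ₗ[k] I)
    (ρl : I →ₗ[k] H ⊗[k] I) (ρr : I →ₗ[k] I ⊗[k] H)
    -- `(H, I)` is a Dorroh pair of algebras
    (hHassoc : ∀ a b c : H, mH (mH a b) c = mH a (mH b c))
    (hIassoc : ∀ x y z : I, mI (mI x y) z = mI x (mI y z))
    (hll : ∀ (a b : H) (x : I), l (mH a b) x = l a (l b x))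
    (hrr : ∀ (x : I) (a b : H), r (r x a) b = r x (mH a b))
    (hlr : ∀ (a : H) (x : I) (b : H), r (l a x) b = l a (r x b))
    (ha1 : ∀ (a : H) (x y : I), l a (mI x y) = mI (l a x) y)
    (ha2 : ∀ (x : I) (a : H) (y : I), mI (r x a) y = mI x (l a y))
    (ha3 : ∀ (x y : I) (a : H), r (mI x y) a = mI x (r y a))
    -- `(H, I)` is a Dorroh pair of coalgebras
    (hHco : Coassoc dH) (hIco : Coassoc dI)
    (hcl : (TensorProduct.assoc k H H I).toLinearMap ∘ₗ TensorProduct.map dH LinearMap.id ∘ₗ ρl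
      = TensorProduct.map LinearMap.id ρl ∘ₗ ρl)
    (hcr : TensorProduct.map LinearMap.id dH ∘ₗ ρr
      = (TensorProduct.assoc k I H H).toLinearMap ∘ₗ TensorProduct.map ρr LinearMap.id ∘ₗ ρr)
    (hcbi : TensorProduct.map LinearMap.id ρr ∘ₗ ρl
      = (TensorProduct.assoc k H I H).toLinearMap ∘ₗ TensorProduct.map ρl LinearMap.id ∘ₗ ρr)
    (hc1 : TensorProduct.map LinearMap.id ρr ∘ₗ dI
      = (TensorProduct.assoc k I I H).toLinearMap ∘ₗ TensorProduct.map dI LinearMap.id ∘ₗ ρr)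
    (hc2 : (TensorProduct.assoc k H I I).toLinearMap ∘ₗ TensorProduct.map ρl LinearMap.id ∘ₗ dI
      = TensorProduct.map LinearMap.id dI ∘ₗ ρl)
    (hc3 : (TensorProduct.assoc k I H I).toLinearMap ∘ₗ TensorProduct.map ρr LinearMap.id ∘ₗ dI
      = TensorProduct.map LinearMap.id ρl ∘ₗ dI)
    -- `H` is a Hopf algebra with antipode `SH`
    (hone : ∀ a : H, mH oneH a = a ∧ mH a oneH = a)
    (hεcounit : ∀ a : H,
      (TensorProduct.lid k H) (TensorProduct.map εH LinearMap.id (dH a)) = a ∧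
      (TensorProduct.rid k H) (TensorProduct.map LinearMap.id εH (dH a)) = a)
    (hdHmul : ∀ a b : H, dH (mH a b) = tensorMul mH (dH a) (dH b))
    (hdHone : dH oneH = oneH ⊗ₜ[k] oneH)
    (hεHmul : ∀ a b : H, εH (mH a b) = εH a * εH b) (hεHone : εH oneH = 1)
    (hSH : ∀ a : H,
      TensorProduct.lift mH (TensorProduct.map SH LinearMap.id (dH a)) = εH a • oneH ∧
      TensorProduct.lift mH (TensorProduct.map LinearMap.id SH (dH a)) = εH a • oneH)
    -- `H ⋉ I` is a bialgebra with identity `(1,0)` and counit `(h,x) ↦ εH h`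
    (hAone : ∀ p : H × I,
      dorrohMulL mH mI l r (oneH, (0 : I)) p = p ∧ dorrohMulL mH mI l r p (oneH, (0 : I)) = p)
    (hAco : Coassoc (dorrohComul dH dI ρl ρr))
    (hAcounit : ∀ p : H × I,
      (TensorProduct.lid k (H × I)) (TensorProduct.map (εH ∘ₗ LinearMap.fst k H I) LinearMap.id
        (dorrohComul dH dI ρl ρr p)) = p ∧
      (TensorProduct.rid k (H × I)) (TensorProduct.map LinearMap.id (εH ∘ₗ LinearMap.fst k H I)
        (dorrohComul dH dI ρl ρr p)) = p)
    (hAmul : ∀ p q : H × I,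
      dorrohComul dH dI ρl ρr (dorrohMulL mH mI l r p q)
        = tensorMul (dorrohMulL mH mI l r) (dorrohComul dH dI ρl ρr p)
            (dorrohComul dH dI ρl ρr q))
    (hAεmul : ∀ p q : H × I, εH (dorrohMulL mH mI l r p q).1 = εH p.1 * εH q.1)
    (hAΔone : dorrohComul dH dI ρl ρr (oneH, (0 : I))
      = (oneH, (0 : I)) ⊗ₜ[k] (oneH, (0 : I)))
    -- the comodule structures of `I` are counital
    (hρlcounit : ∀ x : I,
      (TensorProduct.lid k I) (TensorProduct.map εH LinearMap.id (ρl x)) = x)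
    (hρrcounit : ∀ x : I,
      (TensorProduct.rid k I) (TensorProduct.map LinearMap.id εH (ρr x)) = x) :
    -- then `B = {a ∈ A | (1 ⊗ π_H)Δ(a) = a ⊗ 1}` equals `{(λ1_H, x) | λ ∈ k, x ∈ I^{coH}}`
    {a : H × I | TensorProduct.map LinearMap.id (LinearMap.fst k H I)
        (dorrohComul dH dI ρl ρr a) = a ⊗ₜ[k] oneH}
      = {p : H × I | ∃ (lam : k) (x : I),
          p = (lam • oneH, x) ∧ ρr x = x ⊗ₜ[k] oneH} :=
  stmt17_general oneH dH εH dI ρl ρr hεcounit hdHone
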